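/- Let μ be a Borel probability measure on V_∞ = {0,1}^ℕ, let u = (u_1,...,u_k) ∈ V satisfy μ(B_u) > 0 (so that μ(B_{(u_1,...,u_i)}) > 0 for all i ≤ k), and let (X_n)_{n∈ℕ} ~ DST(μ). With τ_w = inf{n ∈ ℕ : w ∈ X_n} and τ_∅ = 0, the k increments τ_{(u_1,...,u_i)} − τ_{(u_1,...,u_{i-1})}, i = 1,...,k, are independent, and the i-th increment is geometrically distributed on {1,2,3,...} with success parameter μ(B_{(u_1,...,u_i)}). In particular τ_u < ∞ with probability one. -/

import Mathlib

open MeasureTheory ProbabilityTheory Filter Topology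
open scoped ENNReal NNReal

namespace DMTCS

/-- `V = {0,1}^*`: the set of finite binary words. -/
abbrev Word : Type := List Bool

/-- `V_∞ = {0,1}^ℕ`: infinite binary sequences, with the product (Borel) σ-field. -/
abbrev BSeq : Type := ℕ → Bool

/-- The prefix of length `k` of an infinite sequence. -/
def prefixSeq (v : BSeq) (k : ℕ) : Word := List.ofFn (fun i : Fin k => v i)

/-- The cylinder set `B_u = {v ∈ V_∞ : u is a prefix of v}`. -/
def cyl (u : Word) : Set BSeq := {v | prefixSeq v u.length = u}

/-- A (finite) binary tree: a prefix-stable finite set of words. -/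
def IsBinTree (x : Finset Word) : Prop := ∀ v ∈ x, v ≠ [] → v.dropLast ∈ x

/-- The number of nodes of the subtree of `x` rooted at `u`, i.e. `|{v : u+v ∈ x}|`. -/
def subCard (x : Finset Word) (u : Word) : ℕ := (x.filter (fun w => u <+: w)).card

/-- The relative subtree size function `t(x,u)`. -/
noncomputable def stf (x : Finset Word) (u : Word) : ℝ := (subCard x u : ℝ) / (x.card : ℝ)

/-- The length at which the routing path of `v` first exits the tree `x`. -/
noncomputable def exitLen (x : Finset Word) (v : BSeq) : ℕ := sInf {k | prefixSeq v k ∉ x}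

/-- The external node of `x` at which the routing path of `v` exits `x`. -/
noncomputable def exitNode (x : Finset Word) (v : BSeq) : Word := prefixSeq v (exitLen x v)

/-- The digital search tree (DST) algorithm: `dstSeq ξ 0 = {∅}` (the tree with one node,
corresponding to `X_1`), and the next tree adjoins the external node where the routing
path of the next input exits the current tree; `dstSeq ξ n` has `n+1` nodes and
corresponds to `X_{n+1}`. -/
noncomputable def dstSeq (ξ : ℕ → BSeq) : ℕ → Finset Word
  | 0 => {([] : Word)}
  | n + 1 => insert (exitNode (dstSeq ξ n) (ξ n)) (dstSeq ξ n)

/-- Entry time of the node `w` into the increasing tree sequence `x`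
(so `entryTime x [] = 0` and the paper's `τ_∅ = 0` convention holds). -/
noncomputable def entryTime (x : ℕ → Finset Word) (w : Word) : ℕ := sInf {n | w ∈ x n}

/-! ### prefixSeq basics -/

lemma prefixSeq_length (v : BSeq) (k : ℕ) : (prefixSeq v k).length = k := by
  simp [prefixSeq]

lemma prefixSeq_zero (v : BSeq) : prefixSeq v 0 = [] := rfl

lemma prefixSeq_succ (v : BSeq) (k : ℕ) :
    prefixSeq v (k + 1) = prefixSeq v k ++ [v k] := by
  rw [prefixSeq, List.ofFn_succ']
  simp [prefixSeq, List.concat_eq_append]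

lemma prefixSeq_take (v : BSeq) {j k : ℕ} (h : j ≤ k) :
    (prefixSeq v k).take j = prefixSeq v j := by
  apply List.ext_getElem
  · simp [prefixSeq, h]
  · intro i h1 h2
    simp_all [prefixSeq]

lemma prefixSeq_dropLast (v : BSeq) (k : ℕ) :
    (prefixSeq v (k + 1)).dropLast = prefixSeq v k := by
  rw [prefixSeq_succ]; simp

lemma mem_cyl (v : BSeq) (w : Word) : v ∈ cyl w ↔ prefixSeq v w.length = w := Iff.rfl

lemma cyl_anti {w' w : Word} (h : w' <+: w) : cyl w ⊆ cyl w' := by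
  intro v hv
  rw [mem_cyl] at hv ⊢
  have hl : w'.length ≤ w.length := h.length_le
  rw [← prefixSeq_take v hl, hv, ← List.prefix_iff_eq_take.mp h]

/-! ### trees -/

lemma exit_set_nonempty (x : Finset Word) (v : BSeq) :
    {k | prefixSeq v k ∉ x}.Nonempty := by
  refine ⟨(x.sup List.length) + 1, fun hmem => ?_⟩
  have h := Finset.le_sup (f := List.length) hmem
  rw [prefixSeq_length] at h
  omega

lemma exitNode_not_mem (x : Finset Word) (v : BSeq) : exitNode x v ∉ x :=
  Nat.sInf_mem (exit_set_nonempty x v)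

lemma mem_of_lt_exitLen {x : Finset Word} {v : BSeq} {j : ℕ} (h : j < exitLen x v) :
    prefixSeq v j ∈ x := by
  by_contra hj
  have h2 : exitLen x v ≤ j := Nat.sInf_le hj
  omega

lemma exitLen_pos {x : Finset Word} (h0 : ([] : Word) ∈ x) (v : BSeq) :
    0 < exitLen x v := by
  rcases Nat.eq_zero_or_pos (exitLen x v) with h | h
  · have := Nat.sInf_mem (exit_set_nonempty x v)
    rw [exitLen] at h
    rw [h] at this
    exact absurd h0 this
  · exact h

lemma dstSeq_isBinTree (ξ : ℕ → BSeq) (n : ℕ) :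
    IsBinTree (dstSeq ξ n) ∧ ([] : Word) ∈ dstSeq ξ n := by
  induction n with
  | zero => exact ⟨fun v hv hne => by simp_all [dstSeq], by simp [dstSeq]⟩
  | succ n ih =>
    obtain ⟨hbt, h0⟩ := ih
    refine ⟨?_, Finset.mem_insert_of_mem h0⟩
    intro w hw hne
    rcases Finset.mem_insert.mp hw with h | h
    · subst h
      obtain ⟨l, hl⟩ := Nat.exists_eq_add_of_lt (exitLen_pos h0 (ξ n))
      apply Finset.mem_insert_of_mem
      rw [exitNode, hl, Nat.zero_add, prefixSeq_dropLast]
      exact mem_of_lt_exitLen (by omega)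
    · exact Finset.mem_insert_of_mem (hbt w h hne)

lemma dstSeq_mono (ξ : ℕ → BSeq) : Monotone (dstSeq ξ) := by
  apply monotone_nat_of_le_succ
  intro n
  exact Finset.subset_insert _ _

lemma mem_of_prefix_of_mem {x : Finset Word} (hbt : IsBinTree x) :
    ∀ (n : ℕ) {w w' : Word}, w.length ≤ n → w ∈ x → w' <+: w → w' ∈ x := by
  intro n
  induction n with
  | zero =>
    intro w w' hl hw hp
    have : w = [] := List.length_eq_zero_iff.mp (Nat.le_zero.mp hl)
    subst this
    rwa [List.prefix_nil.mp hp]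
  | succ n ih =>
    intro w w' hl hw hp
    by_cases hww : w' = w
    · subst hww; exact hw
    · have hlt : w'.length < w.length := by
        rcases Nat.lt_or_ge w'.length w.length with h | h
        · exact h
        · exact absurd (List.prefix_iff_eq_take.mp hp ▸ by
            simp [List.take_of_length_le h]) hww
      have hne : w ≠ [] := by
        intro h; subst h; simp at hlt
      have hdrop : w.dropLast ∈ x := hbt w hw hne
      have hp' : w' <+: w.dropLast := by
        rw [List.dropLast_eq_take]
        rw [List.prefix_iff_eq_take.mp hp]
        rw [List.prefix_iff_eq_take]
        rw [List.take_take, List.length_take]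
        congr 1
        omega
      apply ih (by simp [List.length_dropLast]; omega) hdrop hp'

lemma exitNode_eq_iff {x : Finset Word} (hbt : IsBinTree x) (h0 : ([] : Word) ∈ x)
    {w : Word} (hw : w ≠ []) (v : BSeq) :
    exitNode x v = w ↔ w ∉ x ∧ w.dropLast ∈ x ∧ v ∈ cyl w := by
  constructor
  · intro h
    subst h
    refine ⟨exitNode_not_mem x v, ?_, ?_⟩
    · obtain ⟨l, hl⟩ := Nat.exists_eq_add_of_lt (exitLen_pos h0 v)
      rw [exitNode, hl, Nat.zero_add, prefixSeq_dropLast]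
      exact mem_of_lt_exitLen (by omega)
    · rw [mem_cyl, exitNode, prefixSeq_length]
  · rintro ⟨hnm, hdl, hcyl⟩
    rw [mem_cyl] at hcyl
    have hL0 : 0 < w.length := List.length_pos_iff.mpr hw
    have hEL : exitLen x v = w.length := by
      have hmem : w.length ∈ {k | prefixSeq v k ∉ x} := by
        rw [Set.mem_setOf_eq, hcyl]; exact hnm
      have hlb : ∀ j < w.length, j ∉ {k | prefixSeq v k ∉ x} := by
        intro j hj hjmem
        apply hjmem
        have h1 : prefixSeq v j = w.take j := by
          rw [← prefixSeq_take v hj.le, hcyl]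
        rw [h1]
        apply mem_of_prefix_of_mem hbt w.dropLast.length le_rfl hdl
        rw [List.dropLast_eq_take]
        have h2 : w.take j = (w.take (w.length - 1)).take j := by
          rw [List.take_take]
          congr 1
          omega
        rw [h2]
        exact List.take_prefix _ _
      have h1 : exitLen x v ≤ w.length := Nat.sInf_le hmem
      have h2 : ¬ exitLen x v < w.length := fun hc =>
        hlb _ hc (Nat.sInf_mem (exit_set_nonempty x v))
      omega
    rw [exitNode, hEL, hcyl]

lemma nil_mem_dstSeq (ξ : ℕ → BSeq) (n : ℕ) : ([] : Word) ∈ dstSeq ξ n :=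
  (dstSeq_isBinTree ξ n).2

lemma mem_dstSeq_succ_iff {ξ : ℕ → BSeq} {w : Word} (hw : w ≠ []) (n : ℕ) :
    w ∈ dstSeq ξ (n + 1) ↔
      w ∈ dstSeq ξ n ∨ (w ∉ dstSeq ξ n ∧ w.dropLast ∈ dstSeq ξ n ∧ ξ n ∈ cyl w) := by
  obtain ⟨hbt, h0⟩ := dstSeq_isBinTree ξ n
  show w ∈ insert _ _ ↔ _
  rw [Finset.mem_insert, eq_comm, exitNode_eq_iff hbt h0 hw]
  tauto

/-! ### entry characterization -/

def EntersAt (ξ : ℕ → BSeq) (w : Word) (t : ℕ) : Prop :=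
  ∀ n, w ∈ dstSeq ξ n ↔ t ≤ n

lemma entersAt_nil (ξ : ℕ → BSeq) : EntersAt ξ ([] : Word) 0 :=
  fun n => ⟨fun _ => Nat.zero_le n, fun _ => nil_mem_dstSeq ξ n⟩

lemma entryTime_of_entersAt {ξ : ℕ → BSeq} {w : Word} {t : ℕ}
    (h : EntersAt ξ w t) : entryTime (dstSeq ξ) w = t := by
  rw [entryTime]
  have : {n | w ∈ dstSeq ξ n} = Set.Ici t := Set.ext fun n => h n
  rw [this, csInf_Ici]

lemma mem_dstSeq_child_iff {ξ : ℕ → BSeq} {w' w : Word} {t : ℕ} {b : Bool}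
    (hch : EntersAt ξ w' t) (hw : w = w' ++ [b]) (n : ℕ) :
    w ∈ dstSeq ξ n ↔ ∃ j, t ≤ j ∧ j < n ∧ ξ j ∈ cyl w := by
  have hwne : w ≠ [] := by simp [hw]
  have hdl : w.dropLast = w' := by simp [hw]
  induction n with
  | zero =>
    simp only [dstSeq, Finset.mem_singleton]
    constructor
    · intro h; exact absurd h hwne
    · rintro ⟨j, _, hj, _⟩; omega
  | succ n ih =>
    have hchn : w' ∈ dstSeq ξ n ↔ t ≤ n := hch n
    constructor
    · intro h
      rcases (mem_dstSeq_succ_iff hwne n).mp h with h' | ⟨hnm, hdl', hcyl⟩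
      · obtain ⟨j, hj1, hj2, hj3⟩ := ih.mp h'
        exact ⟨j, hj1, by omega, hj3⟩
      · rw [hdl] at hdl'
        exact ⟨n, hchn.mp hdl', by omega, hcyl⟩
    · rintro ⟨j, hj1, hj2, hj3⟩
      rw [mem_dstSeq_succ_iff hwne n]
      by_cases hjn : j < n
      · exact Or.inl (ih.mpr ⟨j, hj1, hjn, hj3⟩)
      · have hj : j = n := by omega
        by_cases hmem : w ∈ dstSeq ξ n
        · exact Or.inl hmem
        · refine Or.inr ⟨hmem, ?_, by rw [← hj]; exact hj3⟩
          rw [hdl]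
          exact hchn.mpr (hj ▸ hj1)

lemma entersAt_child {ξ : ℕ → BSeq} {w' w : Word} {t d : ℕ} {b : Bool}
    (hch : EntersAt ξ w' t) (hw : w = w' ++ [b])
    (hmiss : ∀ j, t ≤ j → j < t + d → ξ j ∉ cyl w) (hhit : ξ (t + d) ∈ cyl w) :
    EntersAt ξ w (t + d + 1) := by
  intro n
  rw [mem_dstSeq_child_iff hch hw]
  constructor
  · rintro ⟨j, hj1, hj2, hj3⟩
    have : ¬ (j < t + d) := fun hc => hmiss j hj1 hc hj3
    omega
  · intro hn
    exact ⟨t + d, by omega, by omega, hhit⟩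

lemma entersAt_child_extract {ξ : ℕ → BSeq} {w' w : Word} {t d : ℕ} {b : Bool}
    (hch : EntersAt ξ w' t) (hw : w = w' ++ [b])
    (hd : entryTime (dstSeq ξ) w - t = d + 1) :
    (∀ j, t ≤ j → j < t + d → ξ j ∉ cyl w) ∧ ξ (t + d) ∈ cyl w ∧
      EntersAt ξ w (t + d + 1) := by
  by_cases hne : {j | t ≤ j ∧ ξ j ∈ cyl w}.Nonempty
  · have hj₀mem : sInf {j | t ≤ j ∧ ξ j ∈ cyl w} ∈ {j | t ≤ j ∧ ξ j ∈ cyl w} :=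
      Nat.sInf_mem hne
    obtain ⟨hj₀t, hj₀cyl⟩ := hj₀mem
    have hmiss : ∀ j, t ≤ j → j < sInf {j | t ≤ j ∧ ξ j ∈ cyl w} → ξ j ∉ cyl w := by
      intro j hj1 hj2 hj3
      have h3 : sInf {j | t ≤ j ∧ ξ j ∈ cyl w} ≤ j := Nat.sInf_le ⟨hj1, hj3⟩
      omega
    have hd0 : t + (sInf {j | t ≤ j ∧ ξ j ∈ cyl w} - t) = sInf {j | t ≤ j ∧ ξ j ∈ cyl w} := by
      omega
    have hEA' : EntersAt ξ w (t + (sInf {j | t ≤ j ∧ ξ j ∈ cyl w} - t) + 1) := by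
      apply entersAt_child hch hw
      · intro j h1 h2
        exact hmiss j h1 (by omega)
      · rw [hd0]
        exact hj₀cyl
    rw [hd0] at hEA'
    have het : entryTime (dstSeq ξ) w = sInf {j | t ≤ j ∧ ξ j ∈ cyl w} + 1 :=
      entryTime_of_entersAt hEA'
    have hj0d : sInf {j | t ≤ j ∧ ξ j ∈ cyl w} = t + d := by
      rw [het] at hd
      omega
    rw [hj0d] at hEA' hmiss hj₀cyl
    exact ⟨hmiss, hj₀cyl, hEA'⟩
  · exfalso
    have hnever : ∀ n, w ∉ dstSeq ξ n := by
      intro n hn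
      rw [mem_dstSeq_child_iff hch hw] at hn
      obtain ⟨j, hj1, _, hj3⟩ := hn
      exact hne ⟨j, hj1, hj3⟩
    have : entryTime (dstSeq ξ) w = 0 := by
      rw [entryTime]
      have : {n | w ∈ dstSeq ξ n} = ∅ := by
        ext n; simpa using hnever n
      rw [this, Nat.sInf_empty]
    rw [this] at hd
    omega

/-! ### chains along a word -/

lemma take_succ_eq (u : Word) {i : ℕ} (hi : i < u.length) :
    u.take (i + 1) = u.take i ++ [u.get ⟨i, hi⟩] := by
  rw [List.take_succ, List.getElem?_eq_getElem hi]
  simp [List.get_eq_getElem]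

section Chain

variable (ξ : ℕ → BSeq) (u : Word) (n : ℕ → ℕ)

/-- partial sums `s i = Σ_{i'<i} (n i' + 1)`. -/
def psum (n : ℕ → ℕ) (i : ℕ) : ℕ := ∑ i' ∈ Finset.range i, (n i' + 1)

lemma psum_succ (i : ℕ) : psum n (i + 1) = psum n i + (n i + 1) :=
  Finset.sum_range_succ _ i

lemma psum_mono : Monotone (psum n) := by
  intro a b hab
  exact Finset.sum_le_sum_of_subset (Finset.range_subset_range.mpr hab)

/-- the block index of coordinate `j`. -/
noncomputable def blk (n : ℕ → ℕ) (j : ℕ) : ℕ := sInf {i | j < psum n (i + 1)}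

lemma blk_eq {n : ℕ → ℕ} {i j : ℕ} (h1 : psum n i ≤ j) (h2 : j < psum n (i + 1)) :
    blk n j = i := by
  have hmem : i ∈ {i | j < psum n (i + 1)} := h2
  have hle : blk n j ≤ i := Nat.sInf_le hmem
  have hmem' : blk n j ∈ {i | j < psum n (i + 1)} := Nat.sInf_mem ⟨i, hmem⟩
  have : ¬ blk n j < i := by
    intro hc
    have : psum n (blk n j + 1) ≤ psum n i := psum_mono n hc
    have hj : j < psum n (i + 1) := hmem'.trans_le (psum_mono n (by omega))
    exact absurd (lt_of_lt_of_le hmem' this) (by omega)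
  omega

lemma blk_exists {n : ℕ → ℕ} {k j : ℕ} (hj : j < psum n k) :
    ∃ i < k, psum n i ≤ j ∧ j < psum n (i + 1) := by
  induction k with
  | zero => simp [psum] at hj
  | succ k ih =>
    by_cases h : j < psum n k
    · obtain ⟨i, hik, h1, h2⟩ := ih h
      exact ⟨i, by omega, h1, h2⟩
    · exact ⟨k, by omega, by omega, hj⟩

/-- the pattern set at coordinate `j`. -/
noncomputable def patC (u : Word) (n : ℕ → ℕ) (j : ℕ) : Set BSeq :=
  if j + 1 = psum n (blk n j + 1) then cyl (u.take (blk n j + 1))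
  else (cyl (u.take (blk n j + 1)))ᶜ

lemma patC_hit {u : Word} {n : ℕ → ℕ} {i : ℕ} :
    patC u n (psum n i + n i) = cyl (u.take (i + 1)) := by
  have hb : blk n (psum n i + n i) = i :=
    blk_eq (by omega) (by rw [psum_succ]; omega)
  rw [patC, hb, if_pos (by rw [psum_succ]; omega)]

lemma patC_miss {u : Word} {n : ℕ → ℕ} {i r : ℕ} (hr : r < n i) :
    patC u n (psum n i + r) = (cyl (u.take (i + 1)))ᶜ := by
  have hb : blk n (psum n i + r) = i :=
    blk_eq (by omega) (by rw [psum_succ]; omega)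
  rw [patC, hb, if_neg (by rw [psum_succ]; omega)]

/-- forward: from increment values to entry times. -/
lemma chain_entersAt_of_incr :
    ∀ i ≤ u.length,
      (∀ i' < i, entryTime (dstSeq ξ) (u.take (i' + 1))
          - entryTime (dstSeq ξ) (u.take i') = n i' + 1) →
      EntersAt ξ (u.take i) (psum n i) := by
  intro i
  induction i with
  | zero =>
    intro _ _
    simpa [psum] using entersAt_nil ξ
  | succ i ih =>
    intro hik hincr
    have hch : EntersAt ξ (u.take i) (psum n i) :=
      ih (by omega) (fun i' hi' => hincr i' (by omega))
    have hd : entryTime (dstSeq ξ) (u.take (i + 1)) - psum n i = n i + 1 := by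
      rw [← entryTime_of_entersAt hch]
      exact hincr i (by omega)
    have h := (entersAt_child_extract hch (take_succ_eq u (by omega)) hd).2.2
    have he : psum n (i + 1) = psum n i + n i + 1 := by rw [psum_succ]; omega
    rw [he]
    exact h

/-- forward: block pattern extraction. -/
lemma chain_pattern_of_incr {i : ℕ} (hik : i < u.length)
    (hincr : ∀ i' < i + 1, entryTime (dstSeq ξ) (u.take (i' + 1))
        - entryTime (dstSeq ξ) (u.take i') = n i' + 1) :
    (∀ j, psum n i ≤ j → j < psum n i + n i → ξ j ∉ cyl (u.take (i + 1))) ∧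
      ξ (psum n i + n i) ∈ cyl (u.take (i + 1)) := by
  have hch : EntersAt ξ (u.take i) (psum n i) :=
    chain_entersAt_of_incr ξ u n i (by omega) (fun i' hi' => hincr i' (by omega))
  have hd : entryTime (dstSeq ξ) (u.take (i + 1)) - psum n i = n i + 1 := by
    rw [← entryTime_of_entersAt hch]
    exact hincr i (by omega)
  have h := entersAt_child_extract hch (take_succ_eq u hik) hd
  exact ⟨h.1, h.2.1⟩

/-- backward: from patterns to entry times. -/
lemma chain_entersAt_of_pattern :
    ∀ i ≤ u.length,
      (∀ i' < i, (∀ r < n i', ξ (psum n i' + r) ∉ cyl (u.take (i' + 1))) ∧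
        ξ (psum n i' + n i') ∈ cyl (u.take (i' + 1))) →
      EntersAt ξ (u.take i) (psum n i) := by
  intro i
  induction i with
  | zero =>
    intro _ _
    simpa [psum] using entersAt_nil ξ
  | succ i ih =>
    intro hik hpat
    have hch : EntersAt ξ (u.take i) (psum n i) :=
      ih (by omega) (fun i' hi' => hpat i' (by omega))
    obtain ⟨hmiss, hhit⟩ := hpat i (by omega)
    have := entersAt_child hch (take_succ_eq u (by omega)) (d := n i)
      (fun j h1 h2 => by
        have : ξ (psum n i + (j - psum n i)) ∉ cyl (u.take (i + 1)) :=
          hmiss (j - psum n i) (by omega)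
        convert this using 3
        omega)
      hhit
    have he : psum n (i + 1) = psum n i + n i + 1 := by rw [psum_succ]; omega
    rw [he]
    exact this

/-- the joint pointwise equivalence. -/
lemma joint_iff (nn : ℕ → ℕ) :
    (∀ i < u.length, entryTime (dstSeq ξ) (u.take (i + 1))
        - entryTime (dstSeq ξ) (u.take i) = nn i + 1) ↔
    (∀ j < psum nn u.length, ξ j ∈ patC u nn j) := by
  constructor
  · intro hincr j hj
    obtain ⟨i, hik, h1, h2⟩ := blk_exists hj
    obtain ⟨hmiss, hhit⟩ := chain_pattern_of_incr ξ u nn hik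
      (fun i' hi' => hincr i' (by omega))
    rw [psum_succ] at h2
    by_cases hlast : j = psum nn i + nn i
    · rw [hlast, patC_hit]
      exact hhit
    · have hr : j - psum nn i < nn i := by omega
      have hj' : j = psum nn i + (j - psum nn i) := by omega
      rw [hj', patC_miss hr]
      exact hmiss _ (by omega) (by omega)
  · intro hpat i hik
    have hblocks : ∀ i' < u.length,
        (∀ r < nn i', ξ (psum nn i' + r) ∉ cyl (u.take (i' + 1))) ∧
          ξ (psum nn i' + nn i') ∈ cyl (u.take (i' + 1)) := by
      intro i' hi'
      constructor
      · intro r hr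
        have hjlt : psum nn i' + r < psum nn u.length := by
          have := psum_mono nn (show i' + 1 ≤ u.length by omega)
          rw [psum_succ] at this
          omega
        have := hpat _ hjlt
        rwa [patC_miss hr] at this
      · have hjlt : psum nn i' + nn i' < psum nn u.length := by
          have := psum_mono nn (show i' + 1 ≤ u.length by omega)
          rw [psum_succ] at this
          omega
        have := hpat _ hjlt
        rwa [patC_hit] at this
    have h1 : EntersAt ξ (u.take (i + 1)) (psum nn (i + 1)) :=
      chain_entersAt_of_pattern ξ u nn (i + 1) (by omega)
        (fun i' hi' => hblocks i' (by omega))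
    have h0 : EntersAt ξ (u.take i) (psum nn i) :=
      chain_entersAt_of_pattern ξ u nn i (by omega)
        (fun i' hi' => hblocks i' (by omega))
    rw [entryTime_of_entersAt h1, entryTime_of_entersAt h0, psum_succ]
    omega

lemma entersAt_child_of_cofinal {ξ : ℕ → BSeq} {w' w : Word} {t : ℕ} {b : Bool}
    (hch : EntersAt ξ w' t) (hw : w = w' ++ [b])
    (hne : ∃ m, t ≤ m ∧ ξ m ∈ cyl w) :
    ∃ t', EntersAt ξ w t' ∧ t < t' := by
  obtain ⟨m, hm1, hm2⟩ := hne
  have hneS : {j | t ≤ j ∧ ξ j ∈ cyl w}.Nonempty := ⟨m, hm1, hm2⟩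
  have hmem := Nat.sInf_mem hneS
  have ht : t ≤ sInf {j | t ≤ j ∧ ξ j ∈ cyl w} := hmem.1
  have hd0 : t + (sInf {j | t ≤ j ∧ ξ j ∈ cyl w} - t)
      = sInf {j | t ≤ j ∧ ξ j ∈ cyl w} := by omega
  have hEA : EntersAt ξ w (t + (sInf {j | t ≤ j ∧ ξ j ∈ cyl w} - t) + 1) := by
    apply entersAt_child hch hw
    · intro j h1 h2 hc
      have h3 : sInf {j | t ≤ j ∧ ξ j ∈ cyl w} ≤ j := Nat.sInf_le ⟨h1, hc⟩
      omega
    · rw [hd0]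
      exact hmem.2
  rw [hd0] at hEA
  exact ⟨_, hEA, by omega⟩

/-- cofinal hits give entry of the whole chain, with strictly increasing entry times. -/
lemma chain_entersAt_of_cofinal
    (hyp : ∀ i < u.length, ∀ M, ∃ m, M ≤ m ∧ ξ m ∈ cyl (u.take (i + 1))) :
    (∀ i ≤ u.length, ∃ t, EntersAt ξ (u.take i) t) ∧
      (∀ i < u.length, entryTime (dstSeq ξ) (u.take i)
        < entryTime (dstSeq ξ) (u.take (i + 1))) := by
  have main : ∀ i ≤ u.length, ∃ t, EntersAt ξ (u.take i) t := by
    intro i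
    induction i with
    | zero => exact fun _ => ⟨0, by simpa using entersAt_nil ξ⟩
    | succ i ih =>
      intro hik
      obtain ⟨t, hch⟩ := ih (by omega)
      obtain ⟨t', h', -⟩ := entersAt_child_of_cofinal hch (take_succ_eq u (by omega))
        (hyp i (by omega) t)
      exact ⟨t', h'⟩
  refine ⟨main, fun i hik => ?_⟩
  obtain ⟨t, hch⟩ := main i (by omega)
  obtain ⟨t', h', hlt⟩ := entersAt_child_of_cofinal hch (take_succ_eq u (by omega))
    (hyp i (by omega) t)
  rw [entryTime_of_entersAt hch, entryTime_of_entersAt h']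
  exact hlt

end Chain

/-! ### measurability -/

lemma cyl_eq_iInter (w : Word) :
    cyl w = ⋂ (i : ℕ), ⋂ (_ : i < w.length), {v : BSeq | v i = w.getD i false} := by
  ext v
  simp only [Set.mem_iInter, mem_cyl, Set.mem_setOf_eq]
  constructor
  · intro h i hi
    have h1 : (prefixSeq v w.length).getD i false = w.getD i false := by rw [h]
    rw [← h1]
    rw [List.getD_eq_getElem _ _ (by simpa [prefixSeq_length] using hi)]
    simp [prefixSeq]
  · intro h
    apply List.ext_getElem (by simp [prefixSeq_length])
    intro i h1 h2
    rw [prefixSeq_length] at h1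
    have := h i (by omega)
    rw [List.getD_eq_getElem _ _ h2] at this
    simp only [prefixSeq, List.getElem_ofFn]
    simpa using this

lemma measurableSet_cyl (w : Word) : MeasurableSet (cyl w) := by
  rw [cyl_eq_iInter]
  refine MeasurableSet.iInter fun i => MeasurableSet.iInter fun _ => ?_
  exact (measurable_pi_apply i) (measurableSet_singleton _)

lemma measurableSet_prefixSeq_eq (j : ℕ) (w : Word) :
    MeasurableSet {v : BSeq | prefixSeq v j = w} := by
  by_cases h : j = w.length
  · subst h
    exact measurableSet_cyl w
  · have : {v : BSeq | prefixSeq v j = w} = ∅ := by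
      ext v
      simp only [Set.mem_setOf_eq, Set.mem_empty_iff_false, iff_false]
      intro hc
      exact h (by rw [← hc, prefixSeq_length])
    rw [this]
    exact MeasurableSet.empty

lemma measurableSet_prefixSeq_mem (x : Finset Word) (j : ℕ) :
    MeasurableSet {v : BSeq | prefixSeq v j ∈ x} := by
  have : {v : BSeq | prefixSeq v j ∈ x} = ⋃ w ∈ (x : Set Word), {v | prefixSeq v j = w} := by
    ext v
    simp
  rw [this]
  exact MeasurableSet.biUnion x.countable_toSet fun w _ => measurableSet_prefixSeq_eq j w

lemma exitLen_eq_iff (x : Finset Word) (v : BSeq) (L : ℕ) :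
    exitLen x v = L ↔ prefixSeq v L ∉ x ∧ ∀ j < L, prefixSeq v j ∈ x := by
  constructor
  · intro h
    subst h
    exact ⟨Nat.sInf_mem (exit_set_nonempty x v), fun j hj => mem_of_lt_exitLen hj⟩
  · rintro ⟨h1, h2⟩
    have hle : exitLen x v ≤ L := Nat.sInf_le h1
    have hmem : prefixSeq v (exitLen x v) ∉ x := Nat.sInf_mem (exit_set_nonempty x v)
    have : ¬ exitLen x v < L := fun hc => hmem (h2 _ hc)
    omega

lemma measurableSet_exitLen_eq (x : Finset Word) (L : ℕ) :
    MeasurableSet {v : BSeq | exitLen x v = L} := by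
  have : {v : BSeq | exitLen x v = L} =
      {v | prefixSeq v L ∉ x} ∩ ⋂ (j : ℕ), ⋂ (_ : j < L), {v | prefixSeq v j ∈ x} := by
    ext v
    simp only [Set.mem_inter_iff, Set.mem_iInter, Set.mem_setOf_eq, exitLen_eq_iff]
  rw [this]
  exact ((measurableSet_prefixSeq_mem x L).compl).inter
    (MeasurableSet.iInter fun j => MeasurableSet.iInter fun _ =>
      measurableSet_prefixSeq_mem x j)

lemma measurableSet_exitNode_eq (x : Finset Word) (w : Word) :
    MeasurableSet {v : BSeq | exitNode x v = w} := by
  have : {v : BSeq | exitNode x v = w} =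
      {v | exitLen x v = w.length} ∩ {v | prefixSeq v w.length = w} := by
    ext v
    simp only [Set.mem_inter_iff, Set.mem_setOf_eq]
    constructor
    · intro h
      have hl : w.length = exitLen x v := by rw [← h, exitNode, prefixSeq_length]
      rw [exitNode] at h
      exact ⟨hl.symm, by rw [hl]; exact h⟩
    · rintro ⟨h1, h2⟩
      rw [exitNode, h1]
      exact h2
  rw [this]
  exact (measurableSet_exitLen_eq x w.length).inter (measurableSet_prefixSeq_eq _ w)

lemma dstSeq_congr {ξ ξ' : ℕ → BSeq} : ∀ {n : ℕ}, (∀ j < n, ξ j = ξ' j) →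
    dstSeq ξ n = dstSeq ξ' n
  | 0, _ => rfl
  | n + 1, h => by
    have ih := dstSeq_congr (ξ := ξ) (ξ' := ξ') (n := n) (fun j hj => h j (by omega))
    show insert _ _ = insert _ _
    rw [ih, h n (by omega)]

section Meas

variable {Ω : Type*} [MeasurableSpace Ω] {ξ : ℕ → Ω → BSeq}

lemma measurableSet_dstSeq_eq (hmeas : ∀ i, Measurable (ξ i)) (n : ℕ) (x : Finset Word) :
    MeasurableSet {ω | dstSeq (fun j => ξ j ω) n = x} := by
  induction n generalizing x with
  | zero =>
    by_cases h : ({([] : Word)} : Finset Word) = x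
    · have : {ω : Ω | dstSeq (fun j => ξ j ω) 0 = x} = Set.univ := by
        ext ω
        simpa [dstSeq] using h
      rw [this]
      exact MeasurableSet.univ
    · have : {ω : Ω | dstSeq (fun j => ξ j ω) 0 = x} = ∅ := by
        ext ω
        simpa [dstSeq] using h
      rw [this]
      exact MeasurableSet.empty
  | succ n ih =>
    have hset : {ω : Ω | dstSeq (fun j => ξ j ω) (n + 1) = x} =
        ⋃ (y : Finset Word), {ω | dstSeq (fun j => ξ j ω) n = y} ∩
          (ξ n) ⁻¹' {v | insert (exitNode y v) y = x} := by
      ext ω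
      simp only [Set.mem_iUnion, Set.mem_inter_iff, Set.mem_setOf_eq, Set.mem_preimage]
      constructor
      · intro h
        exact ⟨dstSeq (fun j => ξ j ω) n, rfl, h⟩
      · rintro ⟨y, hy, hins⟩
        show insert _ _ = x
        rw [hy]
        exact hins
    rw [hset]
    refine MeasurableSet.iUnion fun y => (ih y).inter ((hmeas n) ?_)
    have : {v : BSeq | insert (exitNode y v) y = x} =
        ⋃ w ∈ {w : Word | insert w y = x}, {v | exitNode y v = w} := by
      ext v
      simp only [Set.mem_setOf_eq, Set.mem_iUnion]
      constructor
      · intro h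
        exact ⟨exitNode y v, h, rfl⟩
      · rintro ⟨w, hw, rfl⟩
        exact hw
    rw [this]
    exact MeasurableSet.biUnion (Set.to_countable _) fun w _ => measurableSet_exitNode_eq y w

lemma measurableSet_mem_dstSeq (hmeas : ∀ i, Measurable (ξ i)) (w : Word) (n : ℕ) :
    MeasurableSet {ω | w ∈ dstSeq (fun j => ξ j ω) n} := by
  have : {ω : Ω | w ∈ dstSeq (fun j => ξ j ω) n} =
      ⋃ (x : Finset Word) (_ : w ∈ x), {ω | dstSeq (fun j => ξ j ω) n = x} := by
    ext ω
    simp only [Set.mem_iUnion, Set.mem_setOf_eq]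
    constructor
    · intro h
      exact ⟨_, h, rfl⟩
    · rintro ⟨x, hx, hh⟩
      rw [hh]
      exact hx
  rw [this]
  exact MeasurableSet.iUnion fun x => MeasurableSet.iUnion fun _ =>
    measurableSet_dstSeq_eq hmeas n x

lemma measurable_entryTime (hmeas : ∀ i, Measurable (ξ i)) (w : Word) :
    Measurable fun ω => entryTime (dstSeq (fun j => ξ j ω)) w := by
  apply measurable_to_countable'
  intro t
  match t with
  | 0 =>
    have : (fun ω => entryTime (dstSeq (fun j => ξ j ω)) w) ⁻¹' {0} =
        {ω | w ∈ dstSeq (fun j => ξ j ω) 0} ∪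
          ⋂ (n : ℕ), {ω | w ∈ dstSeq (fun j => ξ j ω) n}ᶜ := by
      ext ω
      simp only [Set.mem_preimage, Set.mem_singleton_iff, Set.mem_union, Set.mem_iInter,
        Set.mem_compl_iff, Set.mem_setOf_eq, entryTime, Nat.sInf_eq_zero]
      constructor
      · rintro (h | h)
        · exact Or.inl h
        · exact Or.inr fun n hn => by
            have : ω ∈ ({ω | w ∈ dstSeq (fun j => ξ j ω) n} : Set Ω) := hn
            rw [Set.eq_empty_iff_forall_notMem] at h
            exact h n hn
      · rintro (h | h)
        · exact Or.inl h
        · refine Or.inr (Set.eq_empty_iff_forall_notMem.mpr fun n hn => h n hn)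
    rw [this]
    exact ((measurableSet_mem_dstSeq hmeas w 0).union
      (MeasurableSet.iInter fun n => (measurableSet_mem_dstSeq hmeas w n).compl))
  | t + 1 =>
    have : (fun ω => entryTime (dstSeq (fun j => ξ j ω)) w) ⁻¹' {t + 1} =
        {ω | w ∈ dstSeq (fun j => ξ j ω) (t + 1)} ∩
          {ω | w ∈ dstSeq (fun j => ξ j ω) t}ᶜ := by
      ext ω
      simp only [Set.mem_preimage, Set.mem_singleton_iff, Set.mem_inter_iff,
        Set.mem_compl_iff, Set.mem_setOf_eq, entryTime]
      constructor
      · intro h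
        have hne : {n | w ∈ dstSeq (fun j => ξ j ω) n}.Nonempty := by
          by_contra hc
          rw [Set.not_nonempty_iff_eq_empty] at hc
          rw [hc, Nat.sInf_empty] at h
          omega
        have h1 := Nat.sInf_mem hne
        rw [h] at h1
        refine ⟨h1, fun hc => ?_⟩
        have : sInf {n | w ∈ dstSeq (fun j => ξ j ω) n} ≤ t := Nat.sInf_le hc
        omega
      · rintro ⟨h1, h2⟩
        have hub : ∀ j < t + 1, j ∉ {n | w ∈ dstSeq (fun j' => ξ j' ω) n} := by
          intro j hj hc
          exact h2 (dstSeq_mono _ (show j ≤ t by omega) hc)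
        have hle : sInf {n | w ∈ dstSeq (fun j => ξ j ω) n} ≤ t + 1 := Nat.sInf_le h1
        have hmem := Nat.sInf_mem (⟨t + 1, h1⟩ :
          Set.Nonempty {n | w ∈ dstSeq (fun j => ξ j ω) n})
        have : ¬ sInf {n | w ∈ dstSeq (fun j => ξ j ω) n} < t + 1 :=
          fun hc => hub _ hc hmem
        omega
    rw [this]
    exact (measurableSet_mem_dstSeq hmeas w (t + 1)).inter
      (measurableSet_mem_dstSeq hmeas w t).compl

lemma measurable_incr (hmeas : ∀ i, Measurable (ξ i)) (w w' : Word) :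
    Measurable fun ω => entryTime (dstSeq (fun j => ξ j ω)) w
      - entryTime (dstSeq (fun j => ξ j ω)) w' :=
  (measurable_entryTime hmeas w).sub (measurable_entryTime hmeas w')

end Meas

/-! ### probability -/

section Prob

variable {Ω : Type*} [MeasurableSpace Ω] {P : Measure Ω} [IsProbabilityMeasure P]
  {μ : Measure BSeq} [IsProbabilityMeasure μ] {ξ : ℕ → Ω → BSeq}

lemma freqhit (hmeas : ∀ i, Measurable (ξ i))
    (hindep : iIndepFun ξ P)
    (hdist : ∀ i, Measure.map (ξ i) P = μ)
    {A : Set BSeq} (hA : MeasurableSet A) (hA0 : 0 < μ A) :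
    ∀ᵐ ω ∂P, ∀ M, ∃ m, M ≤ m ∧ ξ m ω ∈ A := by
  have hsingle : ∀ m, P ((ξ m) ⁻¹' Aᶜ) = 1 - μ A := by
    intro m
    rw [← Measure.map_apply (hmeas m) hA.compl, hdist m, prob_compl_eq_one_sub hA]
  have hbound : ∀ M r : ℕ,
      P (⋂ (m : ℕ) (_ : M ≤ m), (ξ m) ⁻¹' Aᶜ) ≤ (1 - μ A) ^ r := by
    intro M r
    have hsub : (⋂ (m : ℕ) (_ : M ≤ m), (ξ m) ⁻¹' Aᶜ) ⊆
        ⋂ m ∈ Finset.Ico M (M + r), (ξ m) ⁻¹' Aᶜ := by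
      intro ω hω
      simp only [Set.mem_iInter] at hω ⊢
      intro m hm
      rw [Finset.mem_Ico] at hm
      exact hω m hm.1
    refine (measure_mono hsub).trans ?_
    rw [hindep.meas_biInter (S := Finset.Ico M (M + r))
      (s := fun m => (ξ m) ⁻¹' Aᶜ) (fun m _ => ⟨Aᶜ, hA.compl, rfl⟩)]
    rw [Finset.prod_congr rfl (fun m _ => hsingle m), Finset.prod_const, Nat.card_Ico]
    simp
  have hzero : ∀ M : ℕ, P (⋂ (m : ℕ) (_ : M ≤ m), (ξ m) ⁻¹' Aᶜ) = 0 := by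
    intro M
    have hlt : (1 : ℝ≥0∞) - μ A < 1 :=
      ENNReal.sub_lt_self ENNReal.one_ne_top one_ne_zero hA0.ne'
    have htend := ENNReal.tendsto_pow_atTop_nhds_zero_of_lt_one hlt
    have := ge_of_tendsto' htend (hbound M)
    exact le_antisymm this zero_le
  rw [ae_iff]
  have : {ω | ¬ ∀ M, ∃ m, M ≤ m ∧ ξ m ω ∈ A} =
      ⋃ M : ℕ, ⋂ (m : ℕ) (_ : M ≤ m), (ξ m) ⁻¹' Aᶜ := by
    ext ω
    simp only [Set.mem_setOf_eq]
    constructor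
    · intro hω
      rw [not_forall] at hω
      obtain ⟨M, hM⟩ := hω
      refine Set.mem_iUnion.mpr ⟨M, ?_⟩
      simp only [Set.mem_iInter, Set.mem_preimage, Set.mem_compl_iff]
      intro m hm hc
      exact hM ⟨m, hm, hc⟩
    · intro hω
      obtain ⟨M, hM⟩ := Set.mem_iUnion.mp hω
      simp only [Set.mem_iInter, Set.mem_preimage, Set.mem_compl_iff] at hM
      intro hc
      obtain ⟨m, hm1, hm2⟩ := hc M
      exact hM m hm1 hm2
  rw [this]
  exact measure_iUnion_null fun M => hzero M

/-- the geometric distribution on `{1, 2, ...}` with success parameter `p`. -/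
noncomputable def geom (p : ℝ≥0∞) : Measure ℕ :=
  Measure.sum fun n => ((1 - p) ^ n * p) • Measure.dirac (n + 1)

lemma geom_apply_zero (p : ℝ≥0∞) : geom p {0} = 0 := by
  rw [geom, Measure.sum_apply _ (measurableSet_singleton _)]
  have : ∀ n : ℕ, (((1 - p) ^ n * p) • Measure.dirac (n + 1)) ({0} : Set ℕ) = 0 := by
    intro n
    rw [Measure.smul_apply, Measure.dirac_apply' _ (measurableSet_singleton _)]
    simp
  simp [this]

lemma geom_apply_succ (p : ℝ≥0∞) (m : ℕ) : geom p {m + 1} = (1 - p) ^ m * p := by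
  rw [geom, Measure.sum_apply _ (measurableSet_singleton _)]
  rw [tsum_eq_single m]
  · rw [Measure.smul_apply, Measure.dirac_apply' _ (measurableSet_singleton _)]
    simp
  · intro n hn
    rw [Measure.smul_apply, Measure.dirac_apply' _ (measurableSet_singleton _)]
    have : (n + 1 : ℕ) ∉ ({m + 1} : Set ℕ) := by simp; omega
    rw [Set.indicator_of_notMem this]
    simp

lemma geom_isProbability {p : ℝ≥0∞} (hp0 : p ≠ 0) (hp1 : p ≤ 1) :
    IsProbabilityMeasure (geom p) := by
  constructor
  rw [geom, Measure.sum_apply _ MeasurableSet.univ]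
  have : ∀ n : ℕ, (((1 - p) ^ n * p) • Measure.dirac (n + 1)) (Set.univ : Set ℕ)
      = (1 - p) ^ n * p := by
    intro n
    rw [Measure.smul_apply]
    simp
  rw [tsum_congr this, ENNReal.tsum_mul_right, ENNReal.tsum_geometric,
    ENNReal.sub_sub_cancel ENNReal.one_ne_top hp1, ENNReal.inv_mul_cancel hp0
      (hp1.trans_lt ENNReal.one_lt_top).ne]

lemma measurableSet_patC (u : Word) (nn : ℕ → ℕ) (j : ℕ) :
    MeasurableSet (patC u nn j) := by
  rw [patC]
  split_ifs
  · exact measurableSet_cyl _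
  · exact (measurableSet_cyl _).compl

/-- product of the pattern probabilities. -/
lemma prod_patC (u : Word) (nn : ℕ → ℕ) :
    ∀ k', ∏ j ∈ Finset.range (psum nn k'), μ (patC u nn j) =
      ∏ i ∈ Finset.range k',
        (1 - μ (cyl (u.take (i + 1)))) ^ (nn i) * μ (cyl (u.take (i + 1))) := by
  intro k'
  induction k' with
  | zero => simp [psum]
  | succ k' ih =>
    have hblock : ∏ x ∈ Finset.range (nn k' + 1), μ (patC u nn (psum nn k' + x))
        = (1 - μ (cyl (u.take (k' + 1)))) ^ (nn k') * μ (cyl (u.take (k' + 1))) := by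
      rw [Finset.prod_range_succ, patC_hit]
      congr 1
      rw [Finset.prod_congr rfl (fun r hr => by
        rw [patC_miss (Finset.mem_range.mp hr),
          prob_compl_eq_one_sub (measurableSet_cyl _)]),
        Finset.prod_const, Finset.card_range]
    rw [psum_succ, Finset.prod_range_add, ih, hblock, Finset.prod_range_succ]

end Prob

/-- For `(X_n) ~ DST(μ)` and `u` with `μ(B_u) > 0`, the entry time `τ_u` is a.s. finite, and
the increments `τ_{(u_1..u_i)} - τ_{(u_1..u_{i-1})}`, `i = 1,...,k`, are independent and
geometrically distributed on `{1,2,...}` with success parameter `μ(B_{(u_1..u_i)})`. -/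
theorem stmt3 {Ω : Type*} [MeasurableSpace Ω] (P : Measure Ω) [IsProbabilityMeasure P]
    (μ : Measure BSeq) [IsProbabilityMeasure μ]
    (ξ : ℕ → Ω → BSeq) (hmeas : ∀ i, Measurable (ξ i))
    (hindep : iIndepFun ξ P)
    (hdist : ∀ i, Measure.map (ξ i) P = μ)
    (u : Word) (hu : 0 < μ (cyl u)) :
    (∀ᵐ ω ∂P, ∃ n, u ∈ dstSeq (fun j => ξ j ω) n) ∧
    iIndepFun
      (fun (i : Fin u.length) ω =>
        entryTime (dstSeq (fun j => ξ j ω)) (u.take (i + 1))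
          - entryTime (dstSeq (fun j => ξ j ω)) (u.take i)) P ∧
    ∀ (i : Fin u.length) (m : ℕ),
      P {ω | entryTime (dstSeq (fun j => ξ j ω)) (u.take (i + 1))
            - entryTime (dstSeq (fun j => ξ j ω)) (u.take i) = m + 1}
        = (1 - μ (cyl (u.take (i + 1)))) ^ m * μ (cyl (u.take (i + 1))) := by
    classical
  have hppos : ∀ i : ℕ, 0 < μ (cyl (u.take i)) := by
    intro i
    exact lt_of_lt_of_le hu (measure_mono (cyl_anti (List.take_prefix i u)))
  set D : Fin u.length → Ω → ℕ := fun i ω =>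
    entryTime (dstSeq (fun j => ξ j ω)) (u.take ((i : ℕ) + 1))
      - entryTime (dstSeq (fun j => ξ j ω)) (u.take (i : ℕ)) with hD
  -- a.s. cofinal hits
  have hcof : ∀ᵐ ω ∂P, ∀ i, i < u.length → ∀ M, ∃ m, M ≤ m ∧ ξ m ω ∈ cyl (u.take (i + 1)) := by
    rw [ae_all_iff]
    intro i
    by_cases hi : i < u.length
    · filter_upwards [freqhit hmeas hindep hdist (measurableSet_cyl (u.take (i + 1)))
        (hppos (i + 1))] with ω h
      exact fun _ => h
    · exact ae_of_all _ fun ω hc => absurd hc hi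
  have hbullet1 : ∀ᵐ ω ∂P, ∃ n, u ∈ dstSeq (fun j => ξ j ω) n := by
    filter_upwards [hcof] with ω h
    obtain ⟨t, hch⟩ := (chain_entersAt_of_cofinal (fun j => ξ j ω) u h).1 u.length le_rfl
    rw [List.take_length] at hch
    exact ⟨t, (hch t).mpr le_rfl⟩
  have hDpos : ∀ i : Fin u.length, P {ω | D i ω = 0} = 0 := by
    intro i
    rw [measure_eq_zero_iff_ae_notMem]
    filter_upwards [hcof] with ω h
    have hlt := (chain_entersAt_of_cofinal (fun j => ξ j ω) u h).2 i i.2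
    simp only [Set.mem_setOf_eq, hD]
    omega
  -- joint pmf
  have hjoint : ∀ nn : ℕ → ℕ,
      P (⋂ i : Fin u.length, {ω | D i ω = nn (i : ℕ) + 1}) =
        ∏ i : Fin u.length,
          (1 - μ (cyl (u.take ((i : ℕ) + 1)))) ^ (nn (i : ℕ))
            * μ (cyl (u.take ((i : ℕ) + 1))) := by
    intro nn
    have hev : (⋂ i : Fin u.length, {ω | D i ω = nn (i : ℕ) + 1}) =
        ⋂ j ∈ Finset.range (psum nn u.length), (ξ j) ⁻¹' (patC u nn j) := by
      ext ω
      simp only [Set.mem_iInter, Set.mem_setOf_eq, Set.mem_preimage, Finset.mem_range]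
      constructor
      · intro h j hj
        exact (joint_iff (fun j => ξ j ω) u nn).mp (fun i hi => h ⟨i, hi⟩) j hj
      · intro h i
        exact (joint_iff (fun j => ξ j ω) u nn).mpr (fun j hj => h j hj) (i : ℕ) i.2
    rw [hev, hindep.meas_biInter (S := Finset.range (psum nn u.length))
      (s := fun j => (ξ j) ⁻¹' (patC u nn j))
      (fun j _ => ⟨patC u nn j, measurableSet_patC u nn j, rfl⟩)]
    have hfac : ∀ j, P ((ξ j) ⁻¹' (patC u nn j)) = μ (patC u nn j) := fun j => by
      rw [← Measure.map_apply (hmeas j) (measurableSet_patC u nn j), hdist j]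
    rw [Finset.prod_congr rfl (fun j _ => hfac j), prod_patC u nn u.length,
      ← Fin.prod_univ_eq_prod_range]
  -- target geometric measures
  set γ : Fin u.length → Measure ℕ := fun i => geom (μ (cyl (u.take ((i : ℕ) + 1)))) with hγ
  haveI hγprob : ∀ i, IsProbabilityMeasure (γ i) := fun i =>
    geom_isProbability (hppos _).ne' prob_le_one
  set Dvec : Ω → (Fin u.length → ℕ) := fun ω i => D i ω with hDvec
  have hDmeas : ∀ i, Measurable (D i) := fun i => measurable_incr hmeas _ _
  have hDvecMeas : Measurable Dvec := measurable_pi_lambda _ hDmeas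
  have hmap : Measure.map Dvec P = Measure.pi γ := by
    refine Measure.ext_of_singleton fun m => ?_
    rw [Measure.map_apply hDvecMeas (measurableSet_singleton m)]
    have hpre : Dvec ⁻¹' {m} = ⋂ i, {ω | D i ω = m i} := by
      ext ω
      simp only [Set.mem_preimage, Set.mem_singleton_iff, Set.mem_iInter, Set.mem_setOf_eq,
        hDvec, funext_iff]
    have hrhs : Measure.pi γ {m} = ∏ i, γ i {m i} := by
      rw [← Set.univ_pi_singleton m, Measure.pi_pi]
    rw [hpre, hrhs]
    by_cases hzero : ∃ i, m i = 0
    · obtain ⟨i0, hi0⟩ := hzero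
      have hle : P (⋂ i, {ω | D i ω = m i}) ≤ P {ω | D i0 ω = 0} := by
        refine measure_mono fun ω hω => ?_
        have := Set.mem_iInter.mp hω i0
        rw [Set.mem_setOf_eq] at this ⊢
        omega
      have h1 : P (⋂ i, {ω | D i ω = m i}) = 0 :=
        le_antisymm (hle.trans_eq (hDpos i0)) zero_le
      rw [h1]
      symm
      refine Finset.prod_eq_zero (Finset.mem_univ i0) ?_
      rw [hi0]
      exact geom_apply_zero _
    · push_neg at hzero
      set nn : ℕ → ℕ := fun j => if h : j < u.length then m ⟨j, h⟩ - 1 else 0 with hnn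
      have hmn : ∀ i : Fin u.length, m i = nn (i : ℕ) + 1 := by
        intro i
        rw [hnn]
        simp only [i.2, dif_pos]
        have h1 := hzero i
        have h2 : (⟨(i : ℕ), i.2⟩ : Fin u.length) = i := by
          apply Fin.ext
          rfl
        rw [h2]
        omega
      have hev2 : (⋂ i, {ω | D i ω = m i}) = ⋂ i, {ω | D i ω = nn (i : ℕ) + 1} := by
        refine Set.iInter_congr fun i => ?_
        rw [hmn i]
      rw [hev2, hjoint nn]
      refine Finset.prod_congr rfl fun i _ => ?_
      rw [hmn i, geom_apply_succ]
  -- the key product identity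
  have key : ∀ (S : Finset (Fin u.length)) (sets : Fin u.length → Set ℕ),
      P (⋂ i ∈ S, (D i) ⁻¹' (sets i)) = ∏ i ∈ S, γ i (sets i) := by
    intro S sets
    have hset : (⋂ i ∈ S, (D i) ⁻¹' (sets i)) =
        Dvec ⁻¹' (Set.pi Set.univ fun i => if i ∈ S then sets i else Set.univ) := by
      ext ω
      simp only [Set.mem_iInter, Set.mem_preimage, Set.mem_pi, Set.mem_univ, true_implies]
      constructor
      · intro h i
        by_cases hi : i ∈ S
        · rw [if_pos hi]
          exact h i hi
        · rw [if_neg hi]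
          trivial
      · intro h i hi
        have := h i
        rwa [if_pos hi] at this
    have hSm : MeasurableSet (Set.pi Set.univ fun i : Fin u.length =>
        if i ∈ S then sets i else Set.univ) :=
      MeasurableSet.univ_pi fun i => MeasurableSet.of_discrete
    rw [hset, ← Measure.map_apply hDvecMeas hSm, hmap, Measure.pi_pi]
    have : ∀ i : Fin u.length, γ i (if i ∈ S then sets i else Set.univ) =
        if i ∈ S then γ i (sets i) else 1 := by
      intro i
      by_cases hi : i ∈ S
      · rw [if_pos hi, if_pos hi]
      · rw [if_neg hi, if_neg hi, measure_univ]
    rw [Finset.prod_congr rfl (fun i _ => this i), Finset.prod_ite_mem,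
      Finset.univ_inter]
  have hsingleton : ∀ (i : Fin u.length) (t : Set ℕ), P ((D i) ⁻¹' t) = γ i t := by
    intro i t
    have := key {i} (fun _ => t)
    simpa using this
  refine ⟨hbullet1, ?_, ?_⟩
  · rw [iIndepFun_iff_measure_inter_preimage_eq_mul]
    intro S sets _
    rw [key S sets]
    exact Finset.prod_congr rfl fun i _ => (hsingleton i (sets i)).symm
  · intro i m
    have h3 : {ω | D i ω = m + 1} = (D i) ⁻¹' {m + 1} := rfl
    calc P {ω | D i ω = m + 1} = γ i {m + 1} := by rw [h3, hsingleton]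
      _ = (1 - μ (cyl (u.take ((i : ℕ) + 1)))) ^ m * μ (cyl (u.take ((i : ℕ) + 1))) :=
        geom_apply_succ _ m


end DMTCS
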